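/- For X* ~ Sk(λ₁, λ₂), the left-shifted partial-mean identity holds: E[X* · 1_{X* ≥ 0}] = λ₂ P(X* = 1) + λ₁ P(X* = 0) + (λ₁ - λ₂) P(X* ≥ 1). -/

import Mathlib

open Real Filter

/-- PMF of the Poisson distribution with mean `l`. -/
noncomputable def poissonPMF (l : ℝ) (n : ℕ) : ℝ :=
  Real.exp (-l) * l ^ n / n.factorial

/-- PMF of the Skellam distribution `Sk(l1, l2)`, i.e. the distribution of the
difference `X₁ - X₂` of independent Poisson variables with means `l1`, `l2`,
obtained by the convolution formula. -/
noncomputable def skellamPMF (l1 l2 : ℝ) (x : ℤ) : ℝ :=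
  ∑' k : ℕ, (if 0 ≤ x + (k : ℤ) then poissonPMF l1 (x + (k : ℤ)).toNat else 0) * poissonPMF l2 k

/-- Modified Bessel function of the first kind of integer order `n`,
`I_n(z) = (z/2)^|n| ∑_{k} (z/2)^{2k}/(k! (k+|n|)!)`, with `I_{-n} = I_n`. -/
noncomputable def besselI (n : ℤ) (z : ℝ) : ℝ :=
  (z / 2) ^ n.natAbs *
    ∑' k : ℕ, (z / 2) ^ (2 * k) / ((k.factorial : ℝ) * (k + n.natAbs).factorial)

/-- Upper tail probability `P(X* ≥ a)` of the Skellam distribution. -/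
noncomputable def skellamTail (l1 l2 : ℝ) (a : ℤ) : ℝ :=
  ∑' x : ℤ, if a ≤ x then skellamPMF l1 l2 x else 0

/-!
The Poisson recursion `(n + 1) p(n + 1) = λ p(n)`, applied inside the convolution formula to the
first factor and (after a shift of the summation index) to the second, gives the Stein recursion
`(n + 1) s(n + 1) = λ₁ s(n) - λ₂ s(n + 2)` for the Skellam PMF `s` on `ℕ`. Summing it over `n ≥ 0`
gives `E[X*; X* ≥ 0] = λ₁ P(X* ≥ 0) - λ₂ P(X* ≥ 2)`, which is the claim once `s 0` and `s 1` are
split off.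
-/

lemma poissonPMF_nonneg {l : ℝ} (hl : 0 ≤ l) (n : ℕ) : 0 ≤ poissonPMF l n := by
  unfold poissonPMF; positivity

lemma summable_poissonPMF (l : ℝ) : Summable (poissonPMF l) := by
  refine ((summable_pow_div_factorial l).mul_left (exp (-l))).congr fun n => ?_
  rw [poissonPMF, mul_div_assoc]

lemma natCast_add_one_mul_poissonPMF_succ (l : ℝ) (n : ℕ) :
    ((n : ℝ) + 1) * poissonPMF l (n + 1) = l * poissonPMF l n := by
  unfold poissonPMF
  push_cast [Nat.factorial_succ]
  field_simp
  ring

lemma skellamPMF_natCast (l1 l2 : ℝ) (m : ℕ) :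
    skellamPMF l1 l2 m = ∑' k : ℕ, poissonPMF l1 (m + k) * poissonPMF l2 k := by
  refine tsum_congr fun k => ?_
  rw [if_pos (by positivity)]
  congr

lemma tsum_int_eq_tsum_nat_add {M : Type*} [AddCommMonoid M] [TopologicalSpace M] {f : ℤ → M}
    {a : ℤ} (hf : ∀ x < a, f x = 0) : ∑' x, f x = ∑' n : ℕ, f (n + a) := by
  have hinj : (fun n : ℕ => (n : ℤ) + a).Injective := fun m n h => by simpa using h
  refine (hinj.tsum_eq fun x hx => ?_).symm
  have hax : a ≤ x := not_lt.1 fun h => hx (hf x h)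
  exact ⟨(x - a).toNat, by simp only; omega⟩

section

variable {l1 l2 : ℝ}

lemma summable_poissonPMF_add_mul_poissonPMF (h1 : 0 ≤ l1) (h2 : 0 ≤ l2) :
    Summable fun p : ℕ × ℕ => poissonPMF l1 (p.1 + p.2) * poissonPMF l2 p.2 :=
  ((summable_poissonPMF l1).mul_of_nonneg (summable_poissonPMF l2) (poissonPMF_nonneg h1)
    (poissonPMF_nonneg h2)).comp_injective (i := fun p : ℕ × ℕ => (p.1 + p.2, p.2))
    fun p q h => by simp only [Prod.mk.injEq] at h; ext <;> omega

lemma hasSum_skellamPMF_natCast (h1 : 0 ≤ l1) (h2 : 0 ≤ l2) (m : ℕ) :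
    HasSum (fun k => poissonPMF l1 (m + k) * poissonPMF l2 k) (skellamPMF l1 l2 m) := by
  rw [skellamPMF_natCast]
  exact ((summable_poissonPMF_add_mul_poissonPMF h1 h2).prod_factor m).hasSum

lemma summable_skellamPMF_natCast (h1 : 0 ≤ l1) (h2 : 0 ≤ l2) :
    Summable fun m : ℕ => skellamPMF l1 l2 m := by
  simpa only [skellamPMF_natCast] using (summable_poissonPMF_add_mul_poissonPMF h1 h2).prod

lemma natCast_add_one_mul_skellamPMF_succ (h1 : 0 ≤ l1) (h2 : 0 ≤ l2) (n : ℕ) :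
    ((n : ℝ) + 1) * skellamPMF l1 l2 (n + 1 : ℕ)
      = l1 * skellamPMF l1 l2 n - l2 * skellamPMF l1 l2 (n + 2 : ℕ) := by
  have hshift : HasSum (fun k : ℕ => (k : ℝ) * (poissonPMF l1 (n + 1 + k) * poissonPMF l2 k))
      (l2 * skellamPMF l1 l2 (n + 2 : ℕ)) := by
    refine (hasSum_nat_add_iff' 1).1 ?_
    simp only [Finset.range_one, Finset.sum_singleton, CharP.cast_eq_zero, zero_mul, sub_zero]
    refine ((hasSum_skellamPMF_natCast h1 h2 (n + 2)).mul_left l2).congr_fun fun k => ?_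
    rw [show n + 1 + (k + 1) = n + 2 + k by omega]
    push_cast
    linear_combination poissonPMF l1 (n + 2 + k) * natCast_add_one_mul_poissonPMF_succ l2 k
  refine ((hasSum_skellamPMF_natCast h1 h2 (n + 1)).mul_left _).unique ?_
  refine (((hasSum_skellamPMF_natCast h1 h2 n).mul_left l1).sub hshift).congr_fun fun k => ?_
  have hk := natCast_add_one_mul_poissonPMF_succ l1 (n + k)
  rw [show n + 1 + k = n + k + 1 by omega]
  push_cast at hk ⊢
  linear_combination poissonPMF l2 k * hk

lemma tsum_natCast_mul_skellamPMF (h1 : 0 ≤ l1) (h2 : 0 ≤ l2) :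
    ∑' n : ℕ, (n : ℝ) * skellamPMF l1 l2 n
      = l1 * ∑' n : ℕ, skellamPMF l1 l2 n - l2 * ∑' n : ℕ, skellamPMF l1 l2 (n + 2 : ℕ) := by
  have hq := summable_skellamPMF_natCast h1 h2
  refine ((hasSum_nat_add_iff' 1).1 ?_).tsum_eq
  simp only [Finset.range_one, Finset.sum_singleton, CharP.cast_eq_zero, zero_mul, sub_zero]
  refine ((hq.hasSum.mul_left l1).sub (((summable_nat_add_iff 2).2 hq).hasSum.mul_left l2))
    |>.congr_fun fun n => ?_
  push_cast
  exact natCast_add_one_mul_skellamPMF_succ h1 h2 n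

end

theorem skellam_partial_mean_ge_zero (l1 l2 : ℝ) (h1 : 0 < l1) (h2 : 0 < l2) :
    ∑' x : ℤ, (if 0 ≤ x then (x : ℝ) else 0) * skellamPMF l1 l2 x =
      l2 * skellamPMF l1 l2 1 + l1 * skellamPMF l1 l2 0
        + (l1 - l2) * skellamTail l1 l2 1 := by
  have hq := summable_skellamPMF_natCast h1.le h2.le
  have hmean : ∑' x : ℤ, (if 0 ≤ x then (x : ℝ) else 0) * skellamPMF l1 l2 x
      = ∑' n : ℕ, (n : ℝ) * skellamPMF l1 l2 n := by
    rw [tsum_int_eq_tsum_nat_add (a := 0) fun x hx => by simp [hx.not_ge]]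
    simp
  have htail : skellamTail l1 l2 1 = ∑' n : ℕ, skellamPMF l1 l2 (n + 1 : ℕ) := by
    rw [skellamTail, tsum_int_eq_tsum_nat_add fun x hx => if_neg hx.not_ge]
    simp
  have hsplit0 := hq.tsum_eq_zero_add
  have hsplit1 := ((summable_nat_add_iff 1).2 hq).tsum_eq_zero_add
  simp only [Nat.cast_zero, Nat.cast_one, zero_add, add_assoc, Nat.reduceAdd] at hsplit0 hsplit1
  rw [hmean, tsum_natCast_mul_skellamPMF h1.le h2.le, htail]
  linear_combination l1 * hsplit0 + l2 * hsplit1
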